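/- Let X and Y be non-empty forests over an alphabet 𝒳, let c be a cost function over 𝒳 that is non-negative, self-equal, and conforms to the triangular inequality, let x̄_k be an ancestor of (or equal to) x̄_i in X, and let ȳ_l be an ancestor of (or equal to) ȳ_j in Y. Then the subforest edit distance satisfies the intermediate decomposition: D_c(X[i, rl_X(k)], Y[j, rl_Y(l)]) = min { c(x_i, −) + D_c(X[i+1, rl_X(k)], Y[j, rl_Y(l)]); c(−, y_j) + D_c(X[i, rl_X(k)], Y[j+1, rl_Y(l)]); c(x_i, y_j) + D_c(X[i+1, rl_X(i)], Y[j+1, rl_Y(j)]) + D_c(X[rl_X(i)+1, rl_X(k)], Y[rl_Y(j)+1, rl_Y(l)]) }. -/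

import Mathlib

namespace TED

/-- A tree over an alphabet `α`: a label together with a (possibly empty) list of children. -/
inductive PTree (α : Type) where
  | node : α → List (PTree α) → PTree α

/-- A forest over `α` is a finite list of trees; `[]` is the empty forest `ε`. -/
abbrev Forest (α : Type) := List (PTree α)

namespace PTree

/-- The label of (the root of) a tree. -/
def label {α : Type} : PTree α → α
  | node a _ => a

/-- The children of (the root of) a tree. -/
def children {α : Type} : PTree α → List (PTree α)
  | node _ cs => cs

mutual
  /-- The number of nodes of a tree. -/
  def size {α : Type} : PTree α → ℕ
    | node _ cs => 1 + sizeL cs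
  /-- The number of nodes of a forest. -/
  def sizeL {α : Type} : List (PTree α) → ℕ
    | [] => 0
    | t :: ts => size t + sizeL ts
end

mutual
  /-- The pre-order list of all subtrees of a tree. -/
  def subtreesT {α : Type} : PTree α → List (PTree α)
    | node a cs => node a cs :: subtreesL cs
  /-- The pre-order list of all subtrees of a forest. -/
  def subtreesL {α : Type} : List (PTree α) → List (PTree α)
    | [] => []
    | t :: ts => subtreesT t ++ subtreesL ts
end

end PTree

open PTree

/-- The pre-order `π(X)` of a forest: the list of all its subtrees. -/
def preorder {α : Type} (F : Forest α) : List (PTree α) := PTree.subtreesL F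

/-- The size `|X|` of a forest: the length of its pre-order. -/
def fsize {α : Type} (F : Forest α) : ℕ := (preorder F).length

/-- The `i`-th subtree `x̄_i` (1-indexed pre-order) of a forest, if it exists. -/
def treeAt {α : Type} (F : Forest α) (i : ℕ) : Option (PTree α) := (preorder F)[i - 1]?

/-- The label `x_i` of the `i`-th subtree, as an element of `𝒳 ∪ {−}`
(`none` plays the role of the gap symbol `−`). -/
def labelAt {α : Type} (F : Forest α) (i : ℕ) : Option α := (treeAt F i).map PTree.label

/-- The number of nodes of the `i`-th subtree `x̄_i`. -/
def sizeAt {α : Type} (F : Forest α) (i : ℕ) : ℕ := ((treeAt F i).map PTree.size).getD 0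

/-- A cost function over `α`: a real-valued function on `(𝒳 ∪ {−}) × (𝒳 ∪ {−})`,
where the gap symbol `−` is modelled by `none`. -/
abbrev Cost (α : Type) := Option α → Option α → ℝ

/-- `c` is non-negative. -/
def Nonneg {α : Type} (c : Cost α) : Prop := ∀ x y, 0 ≤ c x y
/-- `c` is self-equal. -/
def SelfEq {α : Type} (c : Cost α) : Prop := ∀ x, c x x = 0
/-- `c` is discernible. -/
def Discernible {α : Type} (c : Cost α) : Prop := ∀ x y, x ≠ y → 0 < c x y
/-- `c` is symmetric. -/
def Symm {α : Type} (c : Cost α) : Prop := ∀ x y, c x y = c y x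
/-- `c` conforms to the triangular inequality. -/
def Triangle {α : Type} (c : Cost α) : Prop := ∀ x y z, c x z ≤ c x y + c y z

/-- Deletion of the first root: its children are spliced into its place. -/
def delRoot {α : Type} : Forest α → Forest α
  | [] => []
  | PTree.node _ cs :: ts => cs ++ ts

/-- Replacement of the label of the first root by `y`. -/
def repRoot {α : Type} (y : α) : Forest α → Forest α
  | [] => []
  | PTree.node _ cs :: ts => PTree.node y cs :: ts

/-- Insertion of a new root labeled `y` at root level, adopting the trees
`l` to `r-1` of the forest as its children. -/
def insRoot {α : Type} (y : α) (l r : ℕ) (F : Forest α) : Forest α :=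
  if r > F.length + 1 ∨ l > r ∨ l < 1 then F
  else if l = r then F.take (l - 1) ++ [PTree.node y []] ++ F.drop (l - 1)
  else F.take (l - 1) ++ [PTree.node y ((F.drop (l - 1)).take (r - l))] ++ F.drop (r - 1)

/-- `del_i`: deletion of the node with pre-order index `i`. -/
def applyDel {α : Type} : ℕ → Forest α → Forest α
  | _, [] => []
  | i, PTree.node a cs :: ts =>
    if i < 1 then PTree.node a cs :: ts
    else if i = 1 then delRoot (PTree.node a cs :: ts)
    else if i ≤ size (PTree.node a cs) then PTree.node a (applyDel (i - 1) cs) :: ts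
    else PTree.node a cs :: applyDel (i - size (PTree.node a cs)) ts
  termination_by _ F => sizeOf F

/-- `rep_{i,y}`: replacement of the label of the node with pre-order index `i` by `y`. -/
def applyRep {α : Type} (y : α) : ℕ → Forest α → Forest α
  | _, [] => []
  | i, PTree.node a cs :: ts =>
    if i < 1 then PTree.node a cs :: ts
    else if i = 1 then repRoot y (PTree.node a cs :: ts)
    else if i ≤ size (PTree.node a cs) then PTree.node a (applyRep y (i - 1) cs) :: ts
    else PTree.node a cs :: applyRep y (i - size (PTree.node a cs)) ts
  termination_by _ F => sizeOf F

/-- `ins_{i,y,l,r}`: insertion of a node labeled `y` as a child of the node with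
pre-order index `i` (at root level if `i = 0`), adopting that node's children
`l` through `r-1` as its children. -/
def applyIns {α : Type} (y : α) (l r : ℕ) : ℕ → Forest α → Forest α
  | 0, F => insRoot y l r F
  | _ + 1, [] => []
  | i + 1, PTree.node a cs :: ts =>
    if i + 1 ≤ size (PTree.node a cs) then PTree.node a (applyIns y l r i cs) :: ts
    else PTree.node a cs :: applyIns y l r (i + 1 - size (PTree.node a cs)) ts
  termination_by _ F => sizeOf F

/-- The standard edits: deletions `del_i`, replacements `rep_{i,y}` and
insertions `ins_{i,y,l,r}`. -/
inductive Edit (α : Type) where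
  | del (i : ℕ)
  | rep (i : ℕ) (y : α)
  | ins (i : ℕ) (y : α) (l r : ℕ)

/-- Application of a single edit to a forest. -/
def Edit.apply {α : Type} : Edit α → Forest α → Forest α
  | .del i, F => applyDel i F
  | .rep i y, F => applyRep y i F
  | .ins i y l r, F => applyIns y l r i F

/-- Application of an edit script `δ̄ = δ₁,…,δ_T` to a forest (left to right). -/
def applyScript {α : Type} (δ : List (Edit α)) (F : Forest α) : Forest α :=
  δ.foldl (fun F e => e.apply F) F

open Classical in
/-- The cost of a single edit with respect to the forest it is applied to:
`0` if the edit leaves the forest unchanged, and otherwise `c(x_i, y)` for a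
replacement, `c(x_i, −)` for a deletion and `c(−, y)` for an insertion. -/
noncomputable def editCost {α : Type} (c : Cost α) (e : Edit α) (F : Forest α) : ℝ :=
  if e.apply F = F then 0
  else
    match e with
    | .del i => c (labelAt F i) none
    | .rep i y => c (labelAt F i) (some y)
    | .ins _ y _ _ => c none (some y)

/-- The cost `c(δ̄, X)` of an edit script: the sum of the costs of its edits,
each evaluated on the forest to which it is applied. -/
noncomputable def scriptCost {α : Type} (c : Cost α) : List (Edit α) → Forest α → ℝ
  | [], _ => 0
  | e :: es, F => editCost c e F + scriptCost c es (e.apply F)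

/-- The (subforest) edit distance `D_c(F, G)`: the infimum of the costs of edit
scripts transforming `F` into `G`. -/
noncomputable def fdist {α : Type} (c : Cost α) (F G : Forest α) : ℝ :=
  sInf { r : ℝ | ∃ δ : List (Edit α), applyScript δ F = G ∧ scriptCost c δ F = r }

/-- The generalized tree edit distance `d_c(x̄, ȳ)` between two trees. -/
noncomputable def ted {α : Type} (c : Cost α) (x y : PTree α) : ℝ := fdist c [x] [y]

/-- `x̄_k` is a (proper) ancestor of `x̄_i`, expressed via 1-indexed pre-order indices:
the descendants of `x̄_k` occupy exactly the pre-order indices `k+1, …, k + |x̄_k| - 1`. -/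
def AncestorIdx {α : Type} (F : Forest α) (k i : ℕ) : Prop :=
  k < i ∧ i < k + sizeAt F k

/-- A tree mapping between two forests: a set `M ⊆ {1,…,|F|} × {1,…,|G|}` such that
for all `(i,j), (i',j') ∈ M` we have `i = i' ↔ j = j'`, `i ≤ i' ↔ j ≤ j'`, and
`x̄_i` is an ancestor of `x̄_{i'}` iff `ȳ_j` is an ancestor of `ȳ_{j'}`. -/
def IsTreeMapping {α : Type} (F G : Forest α) (M : Finset (ℕ × ℕ)) : Prop :=
  (∀ p ∈ M, 1 ≤ p.1 ∧ p.1 ≤ fsize F ∧ 1 ≤ p.2 ∧ p.2 ≤ fsize G) ∧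
  (∀ p ∈ M, ∀ q ∈ M,
    (p.1 = q.1 ↔ p.2 = q.2) ∧
    (p.1 ≤ q.1 ↔ p.2 ≤ q.2) ∧
    (AncestorIdx F p.1 q.1 ↔ AncestorIdx G p.2 q.2))

/-- The cost `c(M, X, Y)` of a tree mapping: the sum of the replacement costs of
the mapped pairs, the deletion costs of the unmapped nodes of `X`, and the
insertion costs of the unmapped nodes of `Y`. -/
noncomputable def mapCost {α : Type} (c : Cost α) (F G : Forest α) (M : Finset (ℕ × ℕ)) : ℝ :=
  (∑ p ∈ M, c (labelAt F p.1) (labelAt G p.2))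
  + (∑ i ∈ (Finset.Icc 1 (fsize F)).filter (fun i => ∀ p ∈ M, p.1 ≠ i), c (labelAt F i) none)
  + (∑ j ∈ (Finset.Icc 1 (fsize G)).filter (fun j => ∀ p ∈ M, p.2 ≠ j), c none (labelAt G j))

/-- A co-optimal tree mapping: a tree mapping of minimum cost. -/
def IsCoOptimal {α : Type} (c : Cost α) (F G : Forest α) (M : Finset (ℕ × ℕ)) : Prop :=
  IsTreeMapping F G M ∧
  ∀ M' : Finset (ℕ × ℕ), IsTreeMapping F G M' → mapCost c F G M ≤ mapCost c F G M'

mutual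
  /-- The 1-indexed pre-order position of the rightmost leaf within a tree. -/
  def rlIdx {α : Type} : PTree α → ℕ
    | .node _ cs => rlGo 1 cs
  /-- Helper: the pre-order position of the rightmost leaf of the last tree of a
  forest, where `acc` pre-order positions precede the forest. -/
  def rlGo {α : Type} : ℕ → List (PTree α) → ℕ
    | acc, [] => acc
    | acc, [t] => acc + rlIdx t
    | acc, t :: ts => rlGo (acc + size t) ts
end

/-- The outermost right leaf `rl_X(i)`: the pre-order index of the rightmost leaf
of the subtree `x̄_i`. -/
def rlAt {α : Type} (F : Forest α) (i : ℕ) : ℕ :=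
  match treeAt F i with
  | some t => i + rlIdx t - 1
  | none => i

/-- Helper for the subforest extraction: keeps the nodes with pre-order indices
between `i` and `j` (preserving ancestral structure); `k` is the pre-order index
of the last node already visited. -/
def subAux {α : Type} : Forest α → ℕ → ℕ → ℕ → Forest α × ℕ
  | [], _, _, k => ([], k)
  | PTree.node a cs :: ts, i, j, k =>
    if k + 1 > j then ([], k + 1)
    else if k + 1 ≥ i then
      let P := subAux cs i j (k + 1)
      let Q := subAux ts i j P.2
      (PTree.node a P.1 :: Q.1, Q.2)
    else
      let P := subAux cs i j (k + 1)
      let Q := subAux ts i j P.2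
      (P.1 ++ Q.1, Q.2)
  termination_by F _ _ _ => sizeOf F

/-- The subforest `X[i, j]`: the restriction of `X` to the nodes with pre-order
indices `i, …, j`, preserving the ancestral structure among them. -/
def subforest {α : Type} (F : Forest α) (i j : ℕ) : Forest α := (subAux F i j 0).1


/-!
Under the three assumptions on `c`, `fdist` coincides with the classical recursion `recDist`:
delete the first root, insert the first root, or match the two first roots and split the rest.
`recDist ≤ fdist` because a single edit changes `recDist` by at most its cost: deletions,
replacements and (undone) insertions all replace one subtree by a forest, and such a local change
can be followed through the recursion option by option. `fdist ≤ recDist` because every option of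
the recursion is realised by an edit script, obtained by transporting scripts into a context.

If `x̄_k` is an ancestor of `x̄_i`, the subforest `X[i, rl_X(k)]` is the tree `x̄_i` followed by
`X[rl_X(i)+1, rl_X(k)]`, and `X[i+1, rl_X(k)]` is the children of `x̄_i` followed by that same
forest; the decomposition is then one unfolding of the recursion.
-/

section Preorder

variable {α : Type}

@[simp] lemma sizeL_nil : sizeL ([] : Forest α) = 0 := rfl

@[simp] lemma sizeL_cons (t : PTree α) (ts : Forest α) : sizeL (t :: ts) = size t + sizeL ts :=
  rfl

@[simp] lemma size_node (a : α) (cs : Forest α) : size (PTree.node a cs) = 1 + sizeL cs := rfl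

@[simp] lemma sizeL_append (A B : Forest α) : sizeL (A ++ B) = sizeL A + sizeL B := by
  induction A with
  | nil => simp
  | cons t ts ih => simp only [List.cons_append, sizeL_cons, ih]; ring

lemma one_le_size (t : PTree α) : 1 ≤ size t := by
  cases t; simp

@[simp] lemma subtreesL_nil : subtreesL ([] : Forest α) = [] := rfl

@[simp] lemma subtreesL_cons (t : PTree α) (ts : Forest α) :
    subtreesL (t :: ts) = subtreesT t ++ subtreesL ts := rfl

@[simp] lemma subtreesT_node (a : α) (cs : Forest α) :
    subtreesT (PTree.node a cs) = PTree.node a cs :: subtreesL cs := rfl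

@[simp] lemma subtreesL_append (A B : Forest α) :
    subtreesL (A ++ B) = subtreesL A ++ subtreesL B := by
  induction A with
  | nil => simp
  | cons t ts ih => simp [ih]

mutual
@[simp] lemma length_subtreesT (t : PTree α) : (subtreesT t).length = size t := by
  cases t with
  | node a cs => simp [length_subtreesL cs, Nat.add_comm]
@[simp] lemma length_subtreesL (F : Forest α) : (subtreesL F).length = sizeL F := by
  cases F with
  | nil => rfl
  | cons t ts => simp [length_subtreesT t, length_subtreesL ts]
end

@[simp] lemma fsize_eq_sizeL (F : Forest α) : fsize F = sizeL F := by
  simp [fsize, preorder]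

lemma exists_treeAt_eq_some {F : Forest α} {i : ℕ} (h1 : 1 ≤ i) (h2 : i ≤ fsize F) :
    ∃ t, treeAt F i = some t :=
  have h : i - 1 < (preorder F).length := by rw [fsize] at h2; omega
  ⟨(preorder F)[i - 1], List.getElem?_eq_getElem h⟩

lemma labelAt_cons_one (a : α) (cs ts : Forest α) :
    labelAt (PTree.node a cs :: ts) 1 = some a := by
  simp [labelAt, treeAt, preorder, PTree.label]

lemma labelAt_cons_of_two_le (a : α) (cs ts : Forest α) {i : ℕ} (hi : 2 ≤ i) :
    labelAt (PTree.node a cs :: ts) i = labelAt (cs ++ ts) (i - 1) := by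
  obtain ⟨i, rfl⟩ : ∃ i', i = i' + 2 := ⟨i - 2, by omega⟩
  simp [labelAt, treeAt, preorder]

lemma labelAt_append_left (A B : Forest α) {i : ℕ} (h1 : 1 ≤ i) (h2 : i ≤ sizeL A) :
    labelAt (A ++ B) i = labelAt A i := by
  simp only [labelAt, treeAt, preorder, subtreesL_append]
  rw [List.getElem?_append_left (by rw [length_subtreesL]; omega)]

lemma labelAt_append_right (A B : Forest α) {i : ℕ} (h : sizeL A < i) :
    labelAt (A ++ B) i = labelAt B (i - sizeL A) := by
  simp only [labelAt, treeAt, preorder, subtreesL_append]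
  rw [List.getElem?_append_right (by rw [length_subtreesL]; omega), length_subtreesL,
    Nat.sub_right_comm]

end Preorder

section ReplaceAt

variable {α : Type}

/-- `replaceAt r i F` replaces the subtree `x̄_i` of `F` by the forest `r x̄_i`; it is the
identity if `i` is not a pre-order index of `F`. -/
def replaceAt (r : PTree α → Forest α) : ℕ → Forest α → Forest α
  | _, [] => []
  | i, PTree.node a cs :: ts =>
    if i < 1 then PTree.node a cs :: ts
    else if i = 1 then r (PTree.node a cs) ++ ts
    else if i ≤ size (PTree.node a cs) then PTree.node a (replaceAt r (i - 1) cs) :: ts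
    else PTree.node a cs :: replaceAt r (i - size (PTree.node a cs)) ts

variable (r : PTree α → Forest α)

lemma applyDel_eq_replaceAt : ∀ (i : ℕ) (F : Forest α),
    applyDel i F = replaceAt PTree.children i F
  | _, [] => by rw [applyDel, replaceAt]
  | i, PTree.node a cs :: ts => by
    rw [applyDel, replaceAt, applyDel_eq_replaceAt (i - 1) cs, applyDel_eq_replaceAt _ ts]
    rfl

lemma applyRep_eq_replaceAt (y : α) : ∀ (i : ℕ) (F : Forest α),
    applyRep y i F = replaceAt (fun t => [PTree.node y t.children]) i F
  | _, [] => by rw [applyRep, replaceAt]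
  | i, PTree.node a cs :: ts => by
    rw [applyRep, replaceAt, applyRep_eq_replaceAt y (i - 1) cs, applyRep_eq_replaceAt y _ ts]
    rfl

lemma Edit.apply_del (i : ℕ) (F : Forest α) :
    (Edit.del i).apply F = replaceAt PTree.children i F :=
  applyDel_eq_replaceAt i F

lemma Edit.apply_rep (i : ℕ) (y : α) (F : Forest α) :
    (Edit.rep i y).apply F = replaceAt (fun t => [PTree.node y t.children]) i F :=
  applyRep_eq_replaceAt y i F

lemma replaceAt_zero (F : Forest α) : replaceAt r 0 F = F := by
  rcases F with _ | ⟨⟨a, cs⟩, ts⟩ <;> simp [replaceAt]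

lemma replaceAt_one (t : PTree α) (ts : Forest α) : replaceAt r 1 (t :: ts) = r t ++ ts := by
  cases t; simp [replaceAt]

lemma replaceAt_cons_of_le (a : α) (cs ts : Forest α) {i : ℕ} (h2 : 2 ≤ i)
    (h : i ≤ size (PTree.node a cs)) :
    replaceAt r i (PTree.node a cs :: ts) = PTree.node a (replaceAt r (i - 1) cs) :: ts := by
  rw [replaceAt, if_neg (by omega), if_neg (by omega), if_pos h]

lemma replaceAt_cons_of_lt (t : PTree α) (ts : Forest α) {i : ℕ} (h : size t < i) :
    replaceAt r i (t :: ts) = t :: replaceAt r (i - size t) ts := by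
  have := one_le_size t
  cases t
  rw [replaceAt, if_neg (by omega), if_neg (by omega), if_neg (by omega)]

lemma replaceAt_of_sizeL_lt {F : Forest α} {i : ℕ} (h : sizeL F < i) : replaceAt r i F = F := by
  induction F generalizing i with
  | nil => simp [replaceAt]
  | cons t ts ih =>
    rw [sizeL_cons] at h
    rw [replaceAt_cons_of_lt r t ts (by omega), ih (by omega)]

lemma replaceAt_of_not_mem_Icc {F : Forest α} {i : ℕ} (h : ¬(1 ≤ i ∧ i ≤ sizeL F)) :
    replaceAt r i F = F := by
  rcases Nat.eq_zero_or_pos i with rfl | hi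
  · exact replaceAt_zero r F
  · exact replaceAt_of_sizeL_lt r (by omega)

lemma mem_Icc_of_replaceAt_ne {F : Forest α} {i : ℕ} (h : replaceAt r i F ≠ F) :
    1 ≤ i ∧ i ≤ sizeL F :=
  not_imp_comm.mp (replaceAt_of_not_mem_Icc r) h

lemma replaceAt_append_left (A B : Forest α) {i : ℕ} (h1 : 1 ≤ i) (h2 : i ≤ sizeL A) :
    replaceAt r i (A ++ B) = replaceAt r i A ++ B := by
  induction A generalizing i with
  | nil => rw [sizeL_nil] at h2; omega
  | cons t ts ih =>
    obtain ⟨a, cs⟩ := t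
    rw [sizeL_cons] at h2
    rcases Nat.lt_or_ge (size (PTree.node a cs)) i with hc | hc
    · rw [List.cons_append, replaceAt_cons_of_lt r _ _ hc, replaceAt_cons_of_lt r _ _ hc,
        ih (by omega) (by omega), List.cons_append]
    · rcases Nat.eq_or_lt_of_le h1 with rfl | hi
      · simp [replaceAt_one]
      · rw [List.cons_append, replaceAt_cons_of_le r a cs _ hi hc,
          replaceAt_cons_of_le r a cs _ hi hc, List.cons_append]

lemma replaceAt_append_right (A B : Forest α) {i : ℕ} (h : sizeL A < i) :
    replaceAt r i (A ++ B) = A ++ replaceAt r (i - sizeL A) B := by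
  induction A generalizing i with
  | nil => simp
  | cons t ts ih =>
    rw [sizeL_cons] at h
    rw [List.cons_append, replaceAt_cons_of_lt r t _ (by omega), ih (by omega), sizeL_cons,
      Nat.sub_add_eq, List.cons_append]

lemma replaceAt_at_sizeL_succ (A B : Forest α) (t : PTree α) :
    replaceAt r (sizeL A + 1) (A ++ t :: B) = A ++ (r t ++ B) := by
  rw [replaceAt_append_right r A _ (by omega), Nat.add_sub_cancel_left, replaceAt_one]

lemma replaceAt_singleton : ∀ (i : ℕ) (F : Forest α), replaceAt (fun t => [t]) i F = F
  | _, [] => by rw [replaceAt]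
  | i, PTree.node a cs :: ts => by
    rw [replaceAt, replaceAt_singleton (i - 1) cs, replaceAt_singleton _ ts]
    split_ifs <;> rfl

end ReplaceAt

section Insertion

variable {α : Type} (y : α) (l r : ℕ)

lemma applyIns_cons_of_le (m : ℕ) (a : α) (cs ts : Forest α)
    (h : m + 1 ≤ size (PTree.node a cs)) :
    applyIns y l r (m + 1) (PTree.node a cs :: ts) = PTree.node a (applyIns y l r m cs) :: ts := by
  rw [applyIns, if_pos h]

lemma applyIns_cons_of_lt (m : ℕ) (t : PTree α) (ts : Forest α) (h : size t < m + 1) :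
    applyIns y l r (m + 1) (t :: ts) = t :: applyIns y l r (m + 1 - size t) ts := by
  cases t
  rw [applyIns, if_neg (by omega)]

lemma applyIns_of_sizeL_lt {F : Forest α} {m : ℕ} (h1 : 1 ≤ m) (h : sizeL F < m) :
    applyIns y l r m F = F := by
  obtain ⟨m, rfl⟩ : ∃ m', m = m' + 1 := ⟨m - 1, by omega⟩
  induction F generalizing m with
  | nil => rw [applyIns]
  | cons t ts ih =>
    rw [sizeL_cons] at h
    have := one_le_size t
    rw [applyIns_cons_of_lt y l r m t ts (by omega)]
    obtain ⟨m', hm'⟩ : ∃ m', m + 1 - size t = m' + 1 := ⟨m - size t, by omega⟩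
    rw [hm', ih m' (by omega) (by omega)]

lemma insRoot_eq_cons (ds us : Forest α) :
    insRoot y 1 (ds.length + 1) (ds ++ us) = PTree.node y ds :: us := by
  unfold insRoot
  rw [if_neg (by simp)]
  split_ifs with h
  · simp_all
  · simp

lemma insRoot_cons (t : PTree α) (ts : Forest α) (h : ¬(r > ts.length + 1 ∨ l > r ∨ l < 1)) :
    insRoot y (l + 1) (r + 1) (t :: ts) = t :: insRoot y l r ts := by
  obtain ⟨l, rfl⟩ : ∃ l', l = l' + 1 := ⟨l - 1, by omega⟩
  unfold insRoot
  rw [if_neg (by simp only [List.length_cons]; omega), if_neg h]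
  split_ifs with h1 h2 h2
  · simp
  · omega
  · omega
  · obtain ⟨r, rfl⟩ : ∃ r', r = r' + 1 := ⟨r - 1, by omega⟩
    simp [Nat.add_sub_add_right]

lemma labelAt_sizeL_succ (A B cs : Forest α) :
    labelAt (A ++ PTree.node y cs :: B) (sizeL A + 1) = some y := by
  rw [labelAt_append_right A _ (by omega), Nat.add_sub_cancel_left, labelAt_cons_one]

lemma exists_insRoot_inverse {F : Forest α} (h : insRoot y l r F ≠ F) :
    ∃ p, 1 ≤ p ∧ p ≤ sizeL (insRoot y l r F) ∧
      replaceAt PTree.children p (insRoot y l r F) = F ∧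
      labelAt (insRoot y l r F) p = some y := by
  unfold insRoot at h ⊢
  split_ifs at h ⊢ with hg hlr
  · exact absurd rfl h
  all_goals
    refine ⟨sizeL (F.take (l - 1)) + 1, by omega,
      by simp only [sizeL_append, sizeL_cons, sizeL_nil, size_node]; omega,
      ?_, by rw [List.append_assoc, List.singleton_append, labelAt_sizeL_succ]⟩
    rw [List.append_assoc, List.singleton_append, replaceAt_at_sizeL_succ]
  · simp [PTree.children]
  · rw [show F.drop (r - 1) = (F.drop (l - 1)).drop (r - l) by rw [List.drop_drop]; congr 1; omega]
    simp [PTree.children]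

lemma exists_applyIns_inverse : ∀ (m : ℕ) (F : Forest α), applyIns y l r m F ≠ F →
    ∃ p, 1 ≤ p ∧ p ≤ sizeL (applyIns y l r m F) ∧
      replaceAt PTree.children p (applyIns y l r m F) = F ∧
      labelAt (applyIns y l r m F) p = some y
  | 0, F, h => by
    rw [applyIns] at h ⊢
    exact exists_insRoot_inverse y l r h
  | _ + 1, [], h => absurd (by rw [applyIns]) h
  | m + 1, PTree.node a cs :: ts, h => by
    by_cases hc : m + 1 ≤ size (PTree.node a cs)
    · rw [applyIns_cons_of_le y l r m a cs ts hc] at h ⊢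
      obtain ⟨p, hp1, hp2, hrep, hlab⟩ :=
        exists_applyIns_inverse m cs fun he => h (by rw [he])
      refine ⟨p + 1, by omega, by simp only [sizeL_cons, size_node]; omega, ?_, ?_⟩
      · rw [replaceAt_cons_of_le _ a _ ts (by omega) (by rw [size_node]; omega),
          Nat.add_sub_cancel, hrep]
      · rw [labelAt_cons_of_two_le a _ ts (by omega), Nat.add_sub_cancel,
          labelAt_append_left _ ts hp1 hp2, hlab]
    · rw [applyIns_cons_of_lt y l r m _ ts (by omega)] at h ⊢
      obtain ⟨p, hp1, hp2, hrep, hlab⟩ :=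
        exists_applyIns_inverse _ ts fun he => h (by rw [he])
      have := one_le_size (PTree.node a cs)
      have hs : sizeL [PTree.node a cs] = size (PTree.node a cs) := Nat.add_zero _
      rw [← List.singleton_append]
      refine ⟨size (PTree.node a cs) + p, by omega, by rw [sizeL_append, hs]; omega, ?_, ?_⟩
      · rw [replaceAt_append_right _ _ _ (by omega), hs, Nat.add_sub_cancel_left, hrep,
          List.singleton_append]
      · rw [labelAt_append_right _ _ (by omega), hs, Nat.add_sub_cancel_left, hlab]

end Insertion

section Scripts

variable {α : Type} (c : Cost α)

@[simp] lemma applyScript_nil (F : Forest α) : applyScript [] F = F := rfl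

@[simp] lemma applyScript_cons (e : Edit α) (δ : List (Edit α)) (F : Forest α) :
    applyScript (e :: δ) F = applyScript δ (e.apply F) := rfl

lemma applyScript_append (δ₁ δ₂ : List (Edit α)) (F : Forest α) :
    applyScript (δ₁ ++ δ₂) F = applyScript δ₂ (applyScript δ₁ F) :=
  List.foldl_append

@[simp] lemma scriptCost_nil (F : Forest α) : scriptCost c [] F = 0 := rfl

@[simp] lemma scriptCost_cons (e : Edit α) (δ : List (Edit α)) (F : Forest α) :
    scriptCost c (e :: δ) F = editCost c e F + scriptCost c δ (e.apply F) := rfl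

lemma scriptCost_append (δ₁ δ₂ : List (Edit α)) (F : Forest α) :
    scriptCost c (δ₁ ++ δ₂) F =
      scriptCost c δ₁ F + scriptCost c δ₂ (applyScript δ₁ F) := by
  induction δ₁ generalizing F with
  | nil => simp
  | cons e δ ih => simp [ih, add_assoc]

lemma editCost_of_apply_eq {e : Edit α} {F : Forest α} (h : e.apply F = F) :
    editCost c e F = 0 := by
  unfold editCost; rw [if_pos h]

lemma editCost_del_of_ne {i : ℕ} {F : Forest α} (h : (Edit.del i).apply F ≠ F) :
    editCost c (.del i) F = c (labelAt F i) none := by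
  rw [editCost, if_neg h]

lemma editCost_rep_of_ne {i : ℕ} {y : α} {F : Forest α} (h : (Edit.rep i y).apply F ≠ F) :
    editCost c (.rep i y) F = c (labelAt F i) (some y) := by
  rw [editCost, if_neg h]

lemma editCost_ins_of_ne {i l r : ℕ} {y : α} {F : Forest α}
    (h : (Edit.ins i y l r).apply F ≠ F) : editCost c (.ins i y l r) F = c none (some y) := by
  rw [editCost, if_neg h]

variable {c}

lemma editCost_nonneg (hnn : Nonneg c) (e : Edit α) (F : Forest α) : 0 ≤ editCost c e F := by
  unfold editCost
  split
  · exact le_rfl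
  · rcases e <;> exact hnn _ _

lemma scriptCost_nonneg (hnn : Nonneg c) (δ : List (Edit α)) (F : Forest α) :
    0 ≤ scriptCost c δ F := by
  induction δ generalizing F with
  | nil => exact le_rfl
  | cons e δ ih => exact add_nonneg (editCost_nonneg hnn e F) (ih _)

lemma editCost_del_le (hnn : Nonneg c) (i : ℕ) (F : Forest α) :
    editCost c (.del i) F ≤ c (labelAt F i) none := by
  unfold editCost; split
  · exact hnn _ _
  · exact le_rfl

lemma editCost_ins_le (hnn : Nonneg c) (i : ℕ) (y : α) (l r : ℕ) (F : Forest α) :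
    editCost c (.ins i y l r) F ≤ c none (some y) := by
  unfold editCost; split
  · exact hnn _ _
  · exact le_rfl

lemma editCost_rep_le (hnn : Nonneg c) (i : ℕ) (y : α) (F : Forest α) :
    editCost c (.rep i y) F ≤ c (labelAt F i) (some y) := by
  unfold editCost; split
  · exact hnn _ _
  · exact le_rfl

lemma exists_applyScript_eq_nil (F : Forest α) :
    ∃ δ : List (Edit α), applyScript δ F = [] := by
  rcases F with _ | ⟨⟨a, cs⟩, ts⟩
  · exact ⟨[], rfl⟩
  · obtain ⟨δ, hδ⟩ := exists_applyScript_eq_nil (cs ++ ts)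
    refine ⟨.del 1 :: δ, ?_⟩
    rwa [applyScript_cons, Edit.apply_del, replaceAt_one]
  termination_by sizeL F
  decreasing_by simp

lemma exists_applyScript_nil_eq (G : Forest α) :
    ∃ δ : List (Edit α), applyScript δ [] = G := by
  rcases G with _ | ⟨⟨b, ds⟩, us⟩
  · exact ⟨[], rfl⟩
  · obtain ⟨δ, hδ⟩ := exists_applyScript_nil_eq (ds ++ us)
    refine ⟨δ ++ [.ins 0 b 1 (ds.length + 1)], ?_⟩
    rw [applyScript_append, hδ, applyScript_cons, Edit.apply, applyIns, insRoot_eq_cons]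
    rfl
  termination_by sizeL G
  decreasing_by simp

lemma exists_applyScript_eq (F G : Forest α) : ∃ δ : List (Edit α), applyScript δ F = G := by
  obtain ⟨δ₁, h₁⟩ := exists_applyScript_eq_nil F
  obtain ⟨δ₂, h₂⟩ := exists_applyScript_nil_eq G
  exact ⟨δ₁ ++ δ₂, by rw [applyScript_append, h₁, h₂]⟩

lemma fdist_le_scriptCost (hnn : Nonneg c) {δ : List (Edit α)} {F G : Forest α}
    (h : applyScript δ F = G) : fdist c F G ≤ scriptCost c δ F :=
  csInf_le ⟨0, by rintro _ ⟨δ, -, rfl⟩; exact scriptCost_nonneg hnn δ F⟩ ⟨δ, h, rfl⟩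

lemma le_fdist {F G : Forest α} {x : ℝ}
    (h : ∀ δ : List (Edit α), applyScript δ F = G → x ≤ scriptCost c δ F) :
    x ≤ fdist c F G := by
  obtain ⟨δ, hδ⟩ := exists_applyScript_eq F G
  exact le_csInf ⟨_, δ, hδ, rfl⟩ (by rintro _ ⟨δ, hδ, rfl⟩; exact h δ hδ)

lemma fdist_triangle (hnn : Nonneg c) (F G H : Forest α) :
    fdist c F H ≤ fdist c F G + fdist c G H := by
  rw [← sub_le_iff_le_add']
  refine le_fdist fun δ₂ h₂ => ?_
  rw [sub_le_iff_le_add, ← sub_le_iff_le_add']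
  refine le_fdist fun δ₁ h₁ => ?_
  rw [sub_le_iff_le_add, ← h₁, ← scriptCost_append]
  exact fdist_le_scriptCost hnn (by rw [applyScript_append, h₁, h₂])

lemma fdist_apply_le (hnn : Nonneg c) (e : Edit α) (F : Forest α) :
    fdist c F (e.apply F) ≤ editCost c e F := by
  simpa using fdist_le_scriptCost (c := c) hnn (δ := [e]) rfl

end Scripts

section RecDist

variable {α : Type} (c : Cost α)

noncomputable def recDist : Forest α → Forest α → ℝ
  | [], [] => 0
  | PTree.node a cs :: ts, [] => c (some a) none + recDist (cs ++ ts) []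
  | [], PTree.node b ds :: us => c none (some b) + recDist [] (ds ++ us)
  | PTree.node a cs :: ts, PTree.node b ds :: us =>
      min (c (some a) none + recDist (cs ++ ts) (PTree.node b ds :: us))
        (min (c none (some b) + recDist (PTree.node a cs :: ts) (ds ++ us))
          (c (some a) (some b) + recDist cs ds + recDist ts us))
  termination_by F G => sizeL F + sizeL G
  decreasing_by all_goals simp only [sizeL_append, sizeL_cons, sizeL_nil, size_node]; omega

lemma recDist_nil_nil : recDist c ([] : Forest α) [] = 0 := by rw [recDist]

lemma recDist_cons_nil (a : α) (cs ts : Forest α) :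
    recDist c (PTree.node a cs :: ts) [] = c (some a) none + recDist c (cs ++ ts) [] := by
  rw [recDist]

lemma recDist_nil_cons (b : α) (ds us : Forest α) :
    recDist c [] (PTree.node b ds :: us) = c none (some b) + recDist c [] (ds ++ us) := by
  rw [recDist]

lemma recDist_cons_cons (a b : α) (cs ts ds us : Forest α) :
    recDist c (PTree.node a cs :: ts) (PTree.node b ds :: us) =
      min (c (some a) none + recDist c (cs ++ ts) (PTree.node b ds :: us))
        (min (c none (some b) + recDist c (PTree.node a cs :: ts) (ds ++ us))
          (c (some a) (some b) + recDist c cs ds + recDist c ts us)) := by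
  rw [recDist]

lemma recDist_cons_le_delete (a : α) (cs ts G : Forest α) :
    recDist c (PTree.node a cs :: ts) G ≤ c (some a) none + recDist c (cs ++ ts) G := by
  rcases G with _ | ⟨⟨b, ds⟩, us⟩
  · rw [recDist_cons_nil]
  · rw [recDist_cons_cons]; exact min_le_left _ _

lemma recDist_cons_le_insert (b : α) (ds us F : Forest α) :
    recDist c F (PTree.node b ds :: us) ≤ c none (some b) + recDist c F (ds ++ us) := by
  rcases F with _ | ⟨⟨a, cs⟩, ts⟩
  · rw [recDist_nil_cons]
  · rw [recDist_cons_cons]; exact (min_le_right _ _).trans (min_le_left _ _)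

lemma recDist_cons_le_match (a b : α) (cs ts ds us : Forest α) :
    recDist c (PTree.node a cs :: ts) (PTree.node b ds :: us) ≤
      c (some a) (some b) + recDist c cs ds + recDist c ts us := by
  rw [recDist_cons_cons]; exact (min_le_right _ _).trans (min_le_right _ _)

variable {c}

lemma recDist_nonneg (hnn : Nonneg c) : ∀ F G : Forest α, 0 ≤ recDist c F G
  | [], [] => (recDist_nil_nil c).ge
  | PTree.node a cs :: ts, [] => by
    rw [recDist_cons_nil]; exact add_nonneg (hnn _ _) (recDist_nonneg hnn _ _)
  | [], PTree.node b ds :: us => by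
    rw [recDist_nil_cons]; exact add_nonneg (hnn _ _) (recDist_nonneg hnn _ _)
  | PTree.node a cs :: ts, PTree.node b ds :: us => by
    rw [recDist_cons_cons]
    refine le_min (add_nonneg (hnn _ _) (recDist_nonneg hnn _ _))
      (le_min (add_nonneg (hnn _ _) (recDist_nonneg hnn _ _)) ?_)
    exact add_nonneg (add_nonneg (hnn _ _) (recDist_nonneg hnn _ _)) (recDist_nonneg hnn _ _)
  termination_by F G => sizeL F + sizeL G
  decreasing_by all_goals simp only [sizeL_append, sizeL_cons, sizeL_nil, size_node]; omega

lemma recDist_self (hnn : Nonneg c) (hse : SelfEq c) : ∀ F : Forest α, recDist c F F = 0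
  | [] => recDist_nil_nil c
  | PTree.node a cs :: ts => by
    refine le_antisymm ?_ (recDist_nonneg hnn _ _)
    have := recDist_cons_le_match c a a cs ts cs ts
    rwa [hse, recDist_self hnn hse cs, recDist_self hnn hse ts, add_zero, add_zero] at this

lemma recDist_append_le : ∀ A B C D : Forest α,
    recDist c (A ++ B) (C ++ D) ≤ recDist c A C + recDist c B D
  | [], B, [], D => by rw [recDist_nil_nil, zero_add]; rfl
  | [], B, PTree.node b ds :: us, D => by
    rw [recDist_nil_cons, List.nil_append, List.cons_append]
    have := recDist_append_le [] B (ds ++ us) D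
    rw [List.nil_append, List.append_assoc] at this
    linarith [recDist_cons_le_insert c b ds (us ++ D) B]
  | PTree.node a as :: ts, B, [], D => by
    rw [recDist_cons_nil, List.nil_append, List.cons_append]
    have := recDist_append_le (as ++ ts) B [] D
    rw [List.nil_append, List.append_assoc] at this
    linarith [recDist_cons_le_delete c a as (ts ++ B) D]
  | PTree.node a as :: ts, B, PTree.node b ds :: us, D => by
    rw [recDist_cons_cons, ← min_add_add_right, ← min_add_add_right, List.cons_append,
      List.cons_append]
    refine le_min ?_ (le_min ?_ ?_)
    · have := recDist_append_le (as ++ ts) B (PTree.node b ds :: us) D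
      rw [List.append_assoc, List.cons_append] at this
      linarith [recDist_cons_le_delete c a as (ts ++ B) (PTree.node b ds :: (us ++ D))]
    · have := recDist_append_le (PTree.node a as :: ts) B (ds ++ us) D
      rw [List.append_assoc, List.cons_append] at this
      linarith [recDist_cons_le_insert c b ds (us ++ D) (PTree.node a as :: (ts ++ B))]
    · linarith [recDist_append_le ts B us D, recDist_cons_le_match c a b as (ts ++ B) ds (us ++ D)]
  termination_by A _ C _ => sizeL A + sizeL C
  decreasing_by all_goals simp only [sizeL_append, sizeL_cons, sizeL_nil, size_node]; omega

end RecDist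

section LowerBound

variable {α : Type} {c : Cost α}

/-- Only the options "delete the first root" and "match the first roots" need comparing: the
option "insert" is handled by recursion on the second argument. -/
lemma recDist_node_cons_le {κ : ℝ} {a₁ a₂ : α} {X₁ X₂ Y₁ Y₂ : Forest α}
    (hdel : ∀ H, c (some a₁) none + recDist c (X₁ ++ Y₁) H ≤
      κ + (c (some a₂) none + recDist c (X₂ ++ Y₂) H))
    (hmatch : ∀ b H H', c (some a₁) (some b) + recDist c X₁ H + recDist c Y₁ H' ≤
      κ + (c (some a₂) (some b) + recDist c X₂ H + recDist c Y₂ H')) :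
    ∀ G, recDist c (PTree.node a₁ X₁ :: Y₁) G ≤
      κ + recDist c (PTree.node a₂ X₂ :: Y₂) G
  | [] => by
    rw [recDist_cons_nil, recDist_cons_nil]; exact hdel []
  | PTree.node b ds :: us => by
    rw [recDist_cons_cons, recDist_cons_cons, ← min_add_add_left, ← min_add_add_left]
    refine min_le_min (hdel _) (min_le_min ?_ (hmatch b ds us))
    linarith [recDist_node_cons_le hdel hmatch (ds ++ us)]
  termination_by G => sizeL G
  decreasing_by simp

lemma recDist_cons_le_relabel (htr : Triangle c) (a y : α) (cs ts G : Forest α) :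
    recDist c (PTree.node a cs :: ts) G ≤
      c (some a) (some y) + recDist c (PTree.node y cs :: ts) G :=
  recDist_node_cons_le (fun _ => by linarith [htr (some a) (some y) none])
    (fun b _ _ => by linarith [htr (some a) (some y) (some b)]) G

lemma recDist_append_le_cons (hnn : Nonneg c) (htr : Triangle c) (a : α) (cs ts : Forest α) :
    ∀ G, recDist c (cs ++ ts) G ≤ c none (some a) + recDist c (PTree.node a cs :: ts) G
  | [] => by
    rw [recDist_cons_nil]; linarith [hnn none (some a), hnn (some a) none]
  | PTree.node b ds :: us => by
    rw [recDist_cons_cons, ← min_add_add_left, ← min_add_add_left]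
    have hins := recDist_cons_le_insert c b ds us (cs ++ ts)
    refine le_min ?_ (le_min ?_ ?_)
    · linarith [hnn none (some a), hnn (some a) none]
    · linarith [recDist_append_le_cons hnn htr a cs ts (ds ++ us)]
    · linarith [recDist_append_le (c := c) cs ts ds us, htr none (some a) (some b)]
  termination_by G => sizeL G
  decreasing_by simp

/-- A change confined to the subtree at position `p` costs no more, in `recDist`, than the same
change made at the first root. -/
lemma recDist_replaceAt_le {r₁ r₂ : PTree α → Forest α} {κ : Option α → ℝ}
    (hroot : ∀ a cs ts G, recDist c (r₁ (PTree.node a cs) ++ ts) G ≤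
      κ (some a) + recDist c (r₂ (PTree.node a cs) ++ ts) G) :
    ∀ {p : ℕ} {F : Forest α}, 1 ≤ p → p ≤ sizeL F → ∀ G,
      recDist c (replaceAt r₁ p F) G ≤ κ (labelAt F p) + recDist c (replaceAt r₂ p F) G
  | p, [], _, h2, _ => absurd h2 (by simp only [sizeL_nil]; omega)
  | p, PTree.node a cs :: ts, h1, h2, G => by
    rcases Nat.eq_or_lt_of_le h1 with rfl | hp
    · rw [replaceAt_one, replaceAt_one, labelAt_cons_one]; exact hroot a cs ts G
    have hsize : size (PTree.node a cs) = 1 + sizeL cs := size_node a cs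
    rw [sizeL_cons, hsize] at h2
    rw [labelAt_cons_of_two_le a cs ts hp]
    by_cases hc : p ≤ size (PTree.node a cs)
    · have hcs : p - 1 ≤ sizeL cs := by omega
      rw [replaceAt_cons_of_le _ a cs ts hp hc, replaceAt_cons_of_le _ a cs ts hp hc,
        labelAt_append_left cs ts (by omega) hcs]
      refine recDist_node_cons_le (fun H => ?_) (fun b H H' => ?_) G
      · have := recDist_replaceAt_le hroot (F := cs ++ ts) (p := p - 1) (by omega)
          (by rw [sizeL_append]; omega) H
        rw [replaceAt_append_left _ _ _ (by omega) hcs, replaceAt_append_left _ _ _ (by omega) hcs,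
          labelAt_append_left cs ts (by omega) hcs] at this
        linarith
      · linarith [recDist_replaceAt_le hroot (F := cs) (p := p - 1) (by omega) hcs H]
    · have hcs : sizeL cs < p - 1 := by omega
      have hidx : p - 1 - sizeL cs = p - size (PTree.node a cs) := by omega
      rw [replaceAt_cons_of_lt _ _ ts (by omega), replaceAt_cons_of_lt _ _ ts (by omega),
        labelAt_append_right cs ts hcs, hidx]
      refine recDist_node_cons_le (fun H => ?_) (fun b H H' => ?_) G
      · have := recDist_replaceAt_le hroot (F := cs ++ ts) (p := p - 1) (by omega)
          (by rw [sizeL_append]; omega) H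
        rw [replaceAt_append_right _ _ _ hcs, replaceAt_append_right _ _ _ hcs,
          labelAt_append_right cs ts hcs, hidx] at this
        linarith
      · linarith [recDist_replaceAt_le hroot (F := ts) (p := p - size (PTree.node a cs))
          (by omega) (by omega) H']
  termination_by _ F => sizeL F
  decreasing_by all_goals simp only [sizeL_append, sizeL_cons, size_node]; omega

lemma recDist_le_editCost_add (hnn : Nonneg c) (htr : Triangle c) (e : Edit α) (F G : Forest α) :
    recDist c F G ≤ editCost c e F + recDist c (e.apply F) G := by
  by_cases h : e.apply F = F
  · rw [h, editCost_of_apply_eq c h, zero_add]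
  rcases e with i | ⟨i, y⟩ | ⟨i, y, l, r⟩
  · rw [editCost_del_of_ne c h]
    rw [Edit.apply_del] at h ⊢
    have hi := mem_Icc_of_replaceAt_ne _ h
    simpa only [replaceAt_singleton] using recDist_replaceAt_le (r₁ := fun t => [t])
      (κ := (c · none)) (fun a cs ts G => recDist_cons_le_delete c a cs ts G) hi.1 hi.2 G
  · rw [editCost_rep_of_ne c h]
    rw [Edit.apply_rep] at h ⊢
    have hi := mem_Icc_of_replaceAt_ne _ h
    simpa only [replaceAt_singleton] using recDist_replaceAt_le (r₁ := fun t => [t])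
      (κ := (c · (some y))) (fun a cs ts G => recDist_cons_le_relabel htr a y cs ts G)
      hi.1 hi.2 G
  · rw [editCost_ins_of_ne c h]
    obtain ⟨p, hp1, hp2, hdel, hlab⟩ := exists_applyIns_inverse y l r i F h
    have := recDist_replaceAt_le (r₁ := PTree.children) (r₂ := fun t => [t]) (κ := (c none ·))
      (fun a cs ts G => recDist_append_le_cons hnn htr a cs ts G) hp1 hp2 G
    rwa [hdel, hlab, replaceAt_singleton] at this

lemma recDist_le_scriptCost (hnn : Nonneg c) (hse : SelfEq c) (htr : Triangle c)
    (δ : List (Edit α)) (F : Forest α) :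
    recDist c F (applyScript δ F) ≤ scriptCost c δ F := by
  induction δ generalizing F with
  | nil => rw [applyScript_nil, recDist_self hnn hse, scriptCost_nil]
  | cons e δ ih =>
    rw [applyScript_cons, scriptCost_cons]
    linarith [recDist_le_editCost_add hnn htr e F (applyScript δ (e.apply F)), ih (e.apply F)]

lemma recDist_le_fdist (hnn : Nonneg c) (hse : SelfEq c) (htr : Triangle c) (F G : Forest α) :
    recDist c F G ≤ fdist c F G :=
  le_fdist fun δ hδ => hδ ▸ recDist_le_scriptCost hnn hse htr δ F

end LowerBound

section UpperBound

variable {α : Type} {c : Cost α}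

lemma fdist_self (hnn : Nonneg c) (F : Forest α) : fdist c F F = 0 :=
  le_antisymm (fdist_le_scriptCost (δ := []) hnn rfl)
    (le_fdist fun δ _ => scriptCost_nonneg hnn δ F)

lemma fdist_map_le (hnn : Nonneg c) (Φ : Forest α → Forest α)
    (hΦ : ∀ (e : Edit α) X, e.apply X ≠ X →
      ∃ e' : Edit α, e'.apply (Φ X) = Φ (e.apply X) ∧
        editCost c e' (Φ X) ≤ editCost c e X)
    (X Y : Forest α) : fdist c (Φ X) (Φ Y) ≤ fdist c X Y := by
  refine le_fdist fun δ hδ => ?_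
  subst hδ
  induction δ generalizing X with
  | nil => rw [applyScript_nil, fdist_self hnn, scriptCost_nil]
  | cons e δ ih =>
    have hstep : fdist c (Φ X) (Φ (e.apply X)) ≤ editCost c e X := by
      by_cases he : e.apply X = X
      · rw [he, editCost_of_apply_eq c he, fdist_self hnn]
      · obtain ⟨e', he', hcost⟩ := hΦ e X he
        exact he' ▸ (fdist_apply_le hnn e' _).trans hcost
    rw [applyScript_cons, scriptCost_cons]
    linarith [fdist_triangle hnn (Φ X) (Φ (e.apply X)) (Φ (applyScript δ (e.apply X))),
      ih (e.apply X)]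

lemma fdist_node_cons_le (hnn : Nonneg c) (a : α) (X Y ts : Forest α) :
    fdist c (PTree.node a X :: ts) (PTree.node a Y :: ts) ≤ fdist c X Y := by
  refine fdist_map_le hnn (fun X => PTree.node a X :: ts) (fun e X he => ?_) X Y
  have hlab : ∀ i, 1 ≤ i → i ≤ sizeL X →
      labelAt (PTree.node a X :: ts) (i + 1) = labelAt X i :=
    fun i h1 h2 => by
      rw [labelAt_cons_of_two_le a X ts (by omega), Nat.add_sub_cancel,
        labelAt_append_left X ts h1 h2]
  rcases e with i | ⟨i, y⟩ | ⟨i, y, l, r⟩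
  · obtain ⟨h1, h2⟩ := mem_Icc_of_replaceAt_ne _ (Edit.apply_del i X ▸ he)
    refine ⟨.del (i + 1), ?_, ?_⟩
    · simp only [Edit.apply_del]
      rw [replaceAt_cons_of_le _ a X ts (by omega) (by rw [size_node]; omega),
        Nat.add_sub_cancel]
    · rw [editCost_del_of_ne c he, ← hlab i h1 h2]
      exact editCost_del_le hnn _ _
  · obtain ⟨h1, h2⟩ := mem_Icc_of_replaceAt_ne _ (Edit.apply_rep i y X ▸ he)
    refine ⟨.rep (i + 1) y, ?_, ?_⟩
    · simp only [Edit.apply_rep]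
      rw [replaceAt_cons_of_le _ a X ts (by omega) (by rw [size_node]; omega),
        Nat.add_sub_cancel]
    · rw [editCost_rep_of_ne c he, ← hlab i h1 h2]
      exact editCost_rep_le hnn _ _ _
  · have hi : i ≤ sizeL X := by
      by_contra hi
      exact he (applyIns_of_sizeL_lt y l r (by omega) (by omega))
    refine ⟨.ins (i + 1) y l r, applyIns_cons_of_le y l r i a X ts (by rw [size_node]; omega),
      ?_⟩
    rw [editCost_ins_of_ne c he]
    exact editCost_ins_le hnn _ _ _ _ _

lemma fdist_cons_le (hnn : Nonneg c) (t : PTree α) (X Y : Forest α) :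
    fdist c (t :: X) (t :: Y) ≤ fdist c X Y := by
  refine fdist_map_le hnn (t :: ·) (fun e X he => ?_) X Y
  have hs := one_le_size t
  have hs1 : sizeL [t] = size t := Nat.add_zero _
  have hlab : ∀ i, 1 ≤ i → labelAt (t :: X) (i + size t) = labelAt X i := fun i hi => by
    rw [← List.singleton_append, labelAt_append_right _ _ (by omega), hs1, Nat.add_sub_cancel]
  rcases e with i | ⟨i, y⟩ | ⟨i, y, l, r⟩
  · obtain ⟨h1, -⟩ := mem_Icc_of_replaceAt_ne _ (Edit.apply_del i X ▸ he)
    refine ⟨.del (i + size t), ?_, ?_⟩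
    · simp only [Edit.apply_del]
      rw [replaceAt_cons_of_lt _ t X (by omega), Nat.add_sub_cancel]
    · rw [editCost_del_of_ne c he, ← hlab i h1]
      exact editCost_del_le hnn _ _
  · obtain ⟨h1, -⟩ := mem_Icc_of_replaceAt_ne _ (Edit.apply_rep i y X ▸ he)
    refine ⟨.rep (i + size t) y, ?_, ?_⟩
    · simp only [Edit.apply_rep]
      rw [replaceAt_cons_of_lt _ t X (by omega), Nat.add_sub_cancel]
    · rw [editCost_rep_of_ne c he, ← hlab i h1]
      exact editCost_rep_le hnn _ _ _
  · rw [editCost_ins_of_ne c he]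
    rcases i with _ | i
    · have hg : ¬(r > X.length + 1 ∨ l > r ∨ l < 1) := fun hg =>
        he (by rw [Edit.apply, applyIns, insRoot, if_pos hg])
      refine ⟨.ins 0 y (l + 1) (r + 1), ?_, editCost_ins_le hnn _ _ _ _ _⟩
      simp only [Edit.apply, applyIns]
      exact insRoot_cons y l r t X hg
    · refine ⟨.ins (i + 1 + size t) y l r, ?_, editCost_ins_le hnn _ _ _ _ _⟩
      simp only [Edit.apply]
      rw [show i + 1 + size t = (i + size t) + 1 by ring,
        applyIns_cons_of_lt y l r _ t X (by omega), show i + size t + 1 - size t = i + 1 by omega]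

lemma fdist_cons_le_delete (hnn : Nonneg c) (a : α) (cs ts G : Forest α) :
    fdist c (PTree.node a cs :: ts) G ≤ c (some a) none + fdist c (cs ++ ts) G := by
  have hdel : (Edit.del 1).apply (PTree.node a cs :: ts) = cs ++ ts := by
    rw [Edit.apply_del, replaceAt_one]; rfl
  have := editCost_del_le hnn 1 (PTree.node a cs :: ts)
  rw [labelAt_cons_one] at this
  linarith [fdist_triangle hnn (PTree.node a cs :: ts) (cs ++ ts) G,
    hdel ▸ fdist_apply_le hnn (.del 1) (PTree.node a cs :: ts)]

lemma fdist_cons_le_insert (hnn : Nonneg c) (b : α) (ds us F : Forest α) :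
    fdist c F (PTree.node b ds :: us) ≤ c none (some b) + fdist c F (ds ++ us) := by
  have hins : (Edit.ins 0 b 1 (ds.length + 1)).apply (ds ++ us) = PTree.node b ds :: us := by
    rw [Edit.apply, applyIns, insRoot_eq_cons]
  linarith [fdist_triangle hnn F (ds ++ us) (PTree.node b ds :: us),
    hins ▸ fdist_apply_le hnn (.ins 0 b 1 (ds.length + 1)) (ds ++ us),
    editCost_ins_le hnn 0 b 1 (ds.length + 1) (ds ++ us)]

lemma fdist_cons_le_match (hnn : Nonneg c) (a b : α) (cs ts ds us : Forest α) :
    fdist c (PTree.node a cs :: ts) (PTree.node b ds :: us) ≤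
      c (some a) (some b) + fdist c cs ds + fdist c ts us := by
  have hrep : (Edit.rep 1 b).apply (PTree.node a ds :: ts) = PTree.node b ds :: ts := by
    rw [Edit.apply_rep, replaceAt_one]; rfl
  have := editCost_rep_le hnn 1 b (PTree.node a ds :: ts)
  rw [labelAt_cons_one] at this
  linarith [fdist_triangle hnn (PTree.node a cs :: ts) (PTree.node a ds :: ts)
      (PTree.node b ds :: us),
    fdist_triangle hnn (PTree.node a ds :: ts) (PTree.node b ds :: ts) (PTree.node b ds :: us),
    fdist_node_cons_le hnn a cs ds ts,
    hrep ▸ fdist_apply_le hnn (.rep 1 b) (PTree.node a ds :: ts),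
    fdist_cons_le hnn (PTree.node b ds) ts us]

lemma fdist_le_recDist (hnn : Nonneg c) : ∀ F G : Forest α, fdist c F G ≤ recDist c F G
  | [], [] => by rw [fdist_self hnn, recDist_nil_nil]
  | PTree.node a cs :: ts, [] => by
    rw [recDist_cons_nil]
    linarith [fdist_cons_le_delete hnn a cs ts [], fdist_le_recDist hnn (cs ++ ts) []]
  | [], PTree.node b ds :: us => by
    rw [recDist_nil_cons]
    linarith [fdist_cons_le_insert hnn b ds us [], fdist_le_recDist hnn [] (ds ++ us)]
  | PTree.node a cs :: ts, PTree.node b ds :: us => by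
    rw [recDist_cons_cons]
    refine le_min ?_ (le_min ?_ ?_)
    · linarith [fdist_cons_le_delete hnn a cs ts (PTree.node b ds :: us),
        fdist_le_recDist hnn (cs ++ ts) (PTree.node b ds :: us)]
    · linarith [fdist_cons_le_insert hnn b ds us (PTree.node a cs :: ts),
        fdist_le_recDist hnn (PTree.node a cs :: ts) (ds ++ us)]
    · linarith [fdist_cons_le_match hnn a b cs ts ds us, fdist_le_recDist hnn cs ds,
        fdist_le_recDist hnn ts us]
  termination_by F G => sizeL F + sizeL G
  decreasing_by all_goals simp only [sizeL_append, sizeL_cons, sizeL_nil, size_node]; omega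

theorem fdist_eq_recDist (hnn : Nonneg c) (hse : SelfEq c) (htr : Triangle c) (F G : Forest α) :
    fdist c F G = recDist c F G :=
  le_antisymm (fdist_le_recDist hnn F G) (recDist_le_fdist hnn hse htr F G)

end UpperBound

section Ancestor

variable {α : Type}

mutual
lemma rlIdx_eq_size : ∀ t : PTree α, rlIdx t = size t
  | .node a cs => by rw [rlIdx, rlGo_eq_add_sizeL 1 cs, size_node]
lemma rlGo_eq_add_sizeL : ∀ (acc : ℕ) (L : Forest α), rlGo acc L = acc + sizeL L
  | acc, [] => by rw [rlGo, sizeL_nil, add_zero]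
  | acc, [t] => by rw [rlGo, rlIdx_eq_size t]; simp
  | acc, t :: t₂ :: ts => by
    rw [rlGo.eq_3 _ _ _ (List.cons_ne_nil _ _), rlGo_eq_add_sizeL _ (t₂ :: ts),
      sizeL_cons _ (t₂ :: ts), add_assoc]
end

lemma rlAt_eq {F : Forest α} {i : ℕ} {t : PTree α} (h : treeAt F i = some t) :
    rlAt F i = i + size t - 1 := by
  simp only [rlAt, h, rlIdx_eq_size]

lemma exists_subtreesL_eq_append : ∀ {L : Forest α} {m : ℕ} {s : PTree α},
    (subtreesL L)[m]? = some s →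
    ∃ pre post, subtreesL L = pre ++ subtreesT s ++ post ∧ pre.length = m
  | [], _, _, h => by simp at h
  | PTree.node a cs :: ts, 0, s, h => by
    simp only [subtreesL_cons, subtreesT_node, List.cons_append, List.getElem?_cons_zero,
      Option.some.injEq] at h
    exact ⟨[], subtreesL ts, by simp [← h], rfl⟩
  | PTree.node a cs :: ts, m + 1, s, h => by
    have hL : subtreesL (PTree.node a cs :: ts) = PTree.node a cs :: subtreesL (cs ++ ts) := by
      simp
    rw [hL, List.getElem?_cons_succ] at h
    obtain ⟨pre, post, hsplit, hlen⟩ := exists_subtreesL_eq_append h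
    exact ⟨PTree.node a cs :: pre, post, by rw [hL, hsplit]; simp, by simp [hlen]⟩
  termination_by L => sizeL L
  decreasing_by simp

lemma add_size_le_of_ancestor {F : Forest α} {k i : ℕ} {tk ti : PTree α}
    (hk : treeAt F k = some tk) (hi : treeAt F i = some ti) (hk1 : 1 ≤ k) (hki : k < i)
    (hik : i < k + size tk) : i + size ti ≤ k + size tk := by
  obtain ⟨pre, post, hF, hpre⟩ := exists_subtreesL_eq_append hk
  obtain ⟨a, cs⟩ := tk
  rw [size_node] at hik ⊢
  have hcs : (subtreesL cs)[i - k - 1]? = some ti := by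
    rw [← hi, treeAt, preorder, hF, List.append_assoc, List.getElem?_append_right (by omega),
      subtreesT_node, List.cons_append, hpre, show i - 1 - (k - 1) = (i - k - 1) + 1 by omega,
      List.getElem?_cons_succ,
      List.getElem?_append_left (by rw [length_subtreesL]; omega)]
  obtain ⟨pre', post', hcs', hpre'⟩ := exists_subtreesL_eq_append hcs
  have := congrArg List.length hcs'
  simp only [length_subtreesL, List.length_append, length_subtreesT, hpre'] at this
  omega

end Ancestor

section SubAux

variable {α : Type}

lemma subAux_nil (i j k : ℕ) : subAux ([] : Forest α) i j k = ([], k) := by rw [subAux]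

lemma subAux_cons_of_lt (t : PTree α) (ts : Forest α) {i j k : ℕ} (h : j < k + 1) :
    subAux (t :: ts) i j k = ([], k + 1) := by
  cases t; rw [subAux, if_pos h]

lemma subAux_cons (t : PTree α) (ts : Forest α) {i j k : ℕ} (h : k + 1 ≤ j) :
    subAux (t :: ts) i j k = ((subAux [t] i j k).1 ++ (subAux ts i j (subAux [t] i j k).2).1,
      (subAux ts i j (subAux [t] i j k).2).2) := by
  obtain ⟨a, cs⟩ := t
  rw [subAux, subAux]
  split_ifs
  · omega
  all_goals simp [subAux_nil]

lemma subAux_node_cons_of_lt (a : α) (cs ts : Forest α) {i j k : ℕ} (h : k + 1 ≤ j)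
    (hi : k + 1 < i) :
    subAux (PTree.node a cs :: ts) i j k =
      ((subAux cs i j (k + 1)).1 ++ (subAux ts i j (subAux cs i j (k + 1)).2).1,
        (subAux ts i j (subAux cs i j (k + 1)).2).2) := by
  rw [subAux, if_neg (by omega), if_neg (by omega)]

lemma subAux_fst_of_le (F : Forest α) {i j k : ℕ} (h : j ≤ k) : (subAux F i j k).1 = [] := by
  rcases F with _ | ⟨t, ts⟩
  · rw [subAux_nil]
  · rw [subAux_cons_of_lt t ts (by omega)]

lemma le_subAux_snd : ∀ (F : Forest α) (i j k : ℕ), k ≤ (subAux F i j k).2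
  | [], i, j, k => by rw [subAux_nil]
  | PTree.node a cs :: ts, i, j, k => by
    rw [subAux]
    have h₁ := le_subAux_snd cs i j (k + 1)
    have h₂ := le_subAux_snd ts i j (subAux cs i j (k + 1)).2
    split_ifs <;> simp only <;> omega

lemma subAux_snd_of_le : ∀ (F : Forest α) (i j k : ℕ), k + sizeL F ≤ j →
    (subAux F i j k).2 = k + sizeL F
  | [], i, j, k, _ => by rw [subAux_nil, sizeL_nil, add_zero]
  | PTree.node a cs :: ts, i, j, k, h => by
    simp only [sizeL_cons, size_node] at h ⊢
    rw [subAux]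
    have h₁ := subAux_snd_of_le cs i j (k + 1) (by omega)
    have h₂ := subAux_snd_of_le ts i j (k + 1 + sizeL cs) (by omega)
    split_ifs <;> simp only [h₁, h₂] <;> omega

lemma subAux_snd_eq_or_lt : ∀ (F : Forest α) (i j k : ℕ),
    (subAux F i j k).2 = k + sizeL F ∨ j < (subAux F i j k).2
  | [], i, j, k => by rw [subAux_nil, sizeL_nil, add_zero]; exact Or.inl rfl
  | PTree.node a cs :: ts, i, j, k => by
    simp only [sizeL_cons, size_node]
    rw [subAux]
    have h₁ := subAux_snd_eq_or_lt cs i j (k + 1)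
    have h₂ := subAux_snd_eq_or_lt ts i j (subAux cs i j (k + 1)).2
    have h₃ := le_subAux_snd ts i j (subAux cs i j (k + 1)).2
    split_ifs <;> simp only <;> omega

lemma subAux_fst_eq_self : ∀ (F : Forest α) {i j k : ℕ}, i ≤ k + 1 → k + sizeL F ≤ j →
    (subAux F i j k).1 = F
  | [], i, j, k, _, _ => by rw [subAux_nil]
  | PTree.node a cs :: ts, i, j, k, hi, hj => by
    simp only [sizeL_cons, size_node] at hj
    rw [subAux, if_neg (by omega), if_pos (by omega)]
    simp only
    rw [subAux_fst_eq_self cs (by omega) (by omega), subAux_snd_of_le cs i j (k + 1) (by omega),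
      subAux_fst_eq_self ts (by omega) (by omega)]

lemma subAux_fst_eq_nil : ∀ (F : Forest α) {i j k : ℕ}, k + sizeL F < i ∨ j < i →
    (subAux F i j k).1 = []
  | [], i, j, k, _ => by rw [subAux_nil]
  | PTree.node a cs :: ts, i, j, k, h => by
    simp only [sizeL_cons, size_node] at h
    by_cases hj : k + 1 ≤ j
    · rw [subAux_node_cons_of_lt a cs ts hj (by omega)]
      simp only
      rw [subAux_fst_eq_nil cs (by omega), List.nil_append]
      rcases subAux_snd_eq_or_lt cs i j (k + 1) with h' | h'
      · rw [h']; exact subAux_fst_eq_nil ts (by omega)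
      · exact subAux_fst_of_le ts h'.le
    · rw [subAux_cons_of_lt _ ts (by omega)]

lemma subAux_congr_left : ∀ (F : Forest α) {i i' j k : ℕ}, i ≤ k + 1 → i' ≤ k + 1 →
    subAux F i j k = subAux F i' j k
  | [], i, i', j, k, _, _ => by rw [subAux_nil, subAux_nil]
  | PTree.node a cs :: ts, i, i', j, k, hi, hi' => by
    by_cases hj : k + 1 ≤ j
    · rw [subAux, subAux, if_neg (by omega), if_pos hi, if_neg (by omega), if_pos hi']
      simp only
      have hge := le_subAux_snd cs i' j (k + 1)
      rw [subAux_congr_left cs (i' := i') (by omega) (by omega),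
        subAux_congr_left ts (i' := i') (by omega) (by omega)]
    · rw [subAux_cons_of_lt _ ts (by omega), subAux_cons_of_lt _ ts (by omega)]

lemma subAux_fst_append (A B : Forest α) (i j k : ℕ) :
    (subAux (A ++ B) i j k).1 = (subAux A i j k).1 ++ (subAux B i j (subAux A i j k).2).1 := by
  induction A generalizing k with
  | nil => simp [subAux_nil]
  | cons t A ih =>
    by_cases hj : k + 1 ≤ j
    · rw [List.cons_append, subAux_cons t (A ++ B) hj, subAux_cons t A hj]
      simp only
      rw [ih, List.append_assoc]
    · rw [List.cons_append, subAux_cons_of_lt t _ (by omega), subAux_cons_of_lt t _ (by omega),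
        subAux_fst_of_le B (by omega)]
      rfl

lemma subAux_fst_node_cons_of_lt (a : α) (cs ts : Forest α) {i j k : ℕ} (hi : k + 1 < i) :
    (subAux (PTree.node a cs :: ts) i j k).1 = (subAux (cs ++ ts) i j (k + 1)).1 := by
  by_cases hj : k + 1 ≤ j
  · rw [subAux_node_cons_of_lt a cs ts hj hi, subAux_fst_append]
  · rw [subAux_cons_of_lt _ ts (by omega), subAux_fst_of_le _ (by omega)]

lemma subAux_fst_tail_congr (F ts : Forest α) {i i' j k : ℕ} (hi : i ≤ k + sizeL F + 1)
    (hi' : i' ≤ k + sizeL F + 1) :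
    (subAux ts i j (subAux F i j k).2).1 = (subAux ts i' j (subAux F i' j k).2).1 := by
  by_cases hj : k + sizeL F ≤ j
  · rw [subAux_snd_of_le F i j k hj, subAux_snd_of_le F i' j k hj, subAux_congr_left ts hi hi']
  · have h := subAux_snd_eq_or_lt F i j k
    have h' := subAux_snd_eq_or_lt F i' j k
    rw [subAux_fst_of_le ts (by omega), subAux_fst_of_le ts (by omega)]

/-- Starting the extraction anywhere inside the subtree `s` at pre-order index `i` (relative
to the counter `k`) only affects the part of the result coming from `s`. -/
lemma subAux_fst_eq_append : ∀ (F : Forest α) {i i' j k : ℕ} {s : PTree α},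
    k < i → (subtreesL F)[i - k - 1]? = some s → i ≤ i' → i' ≤ i + size s →
    i + size s ≤ j + 1 →
    (subAux F i' j k).1 = (subAux [s] i' j (i - 1)).1 ++ (subAux F (i + size s) j k).1
  | [], _, _, _, _, _, _, hs, _, _, _ => by simp at hs
  | PTree.node a cs :: ts, i, i', j, k, s, hki, hs, h₁, h₂, hj => by
    by_cases hik : i = k + 1
    · have hs0 : PTree.node a cs = s := by simpa [hik] using hs
      subst hs0 hik
      have hsize : sizeL [PTree.node a cs] = size (PTree.node a cs) := Nat.add_zero _
      rw [← List.singleton_append, subAux_fst_append, subAux_fst_append,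
        subAux_fst_eq_nil [_] (i := k + 1 + size _) (Or.inl (by omega)), List.nil_append,
        Nat.add_sub_cancel, subAux_fst_tail_congr [_] ts
          (i' := k + 1 + size (PTree.node a cs)) (by omega) (by omega)]
    · have hs' : (subtreesL (cs ++ ts))[i - (k + 1) - 1]? = some s := by
        rwa [show i - k - 1 = (i - (k + 1) - 1) + 1 by omega, subtreesL_cons, subtreesT_node,
          List.cons_append, List.getElem?_cons_succ, ← subtreesL_append] at hs
      rw [subAux_fst_node_cons_of_lt a cs ts (by omega),
        subAux_fst_node_cons_of_lt a cs ts (by have := one_le_size s; omega)]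
      exact subAux_fst_eq_append (cs ++ ts) (by omega) hs' h₁ h₂ hj
  termination_by F => sizeL F
  decreasing_by simp

end SubAux

section Subforest

variable {α : Type}

lemma subforest_eq_nil (F : Forest α) {i j : ℕ} (h : j < i) : subforest F i j = [] :=
  subAux_fst_eq_nil F (Or.inr h)

lemma subforest_eq_cons {F : Forest α} {i j : ℕ} {s : PTree α} (hi : 1 ≤ i)
    (hs : treeAt F i = some s) (hj : i + size s ≤ j + 1) :
    subforest F i j = s :: subforest F (i + size s) j := by
  rw [subforest,
    subAux_fst_eq_append F hi (by simpa [treeAt, preorder] using hs) le_rfl (by omega) hj,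
    subAux_fst_eq_self [s] (by omega) (by simp only [sizeL_cons, sizeL_nil]; omega)]
  rfl

lemma subforest_succ_eq_append {F : Forest α} {i j : ℕ} {s : PTree α} (hi : 1 ≤ i)
    (hs : treeAt F i = some s) (hj : i + size s ≤ j + 1) :
    subforest F (i + 1) j = s.children ++ subforest F (i + size s) j := by
  have := one_le_size s
  rw [subforest,
    subAux_fst_eq_append F hi (by simpa [treeAt, preorder] using hs) (by omega) (by omega) hj]
  obtain ⟨a, cs⟩ := s
  rw [subAux_fst_node_cons_of_lt a cs [] (by omega), List.append_nil,
    subAux_fst_eq_self cs (by omega) (by simp only [size_node] at hj ⊢; omega)]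
  rfl

lemma subforest_succ_eq_children {F : Forest α} {i : ℕ} {s : PTree α} (hi : 1 ≤ i)
    (hs : treeAt F i = some s) : subforest F (i + 1) (i + size s - 1) = s.children := by
  have := one_le_size s
  rw [subforest_succ_eq_append hi hs (by omega), subforest_eq_nil F (by omega), List.append_nil]

lemma add_size_le_rlAt_add_one {F : Forest α} {k i : ℕ} {ti : PTree α} (hk1 : 1 ≤ k)
    (hk2 : k ≤ fsize F) (hki : k = i ∨ AncestorIdx F k i) (hti : treeAt F i = some ti) :
    i + size ti ≤ rlAt F k + 1 := by
  obtain ⟨tk, htk⟩ := exists_treeAt_eq_some hk1 hk2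
  have := one_le_size tk
  rw [rlAt_eq htk]
  rcases hki with rfl | ⟨hlt, hsize⟩
  · cases htk.symm.trans hti; omega
  · rw [sizeAt, htk] at hsize
    have := add_size_le_of_ancestor htk hti hk1 hlt hsize
    omega

end Subforest

/-- The intermediate decomposition of the subforest edit distance:
for `x̄_k` an ancestor of (or equal to) `x̄_i` and `ȳ_l` an ancestor of (or equal to)
`ȳ_j`, the distance `D_c(X[i, rl_X(k)], Y[j, rl_Y(l)])` decomposes into deletion,
insertion, and replacement-with-split options. -/
theorem fdist_intermediate_decomposition {α : Type} (c : Cost α) (hnn : Nonneg c) (hse : SelfEq c)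
    (htr : Triangle c) (F G : Forest α) (hF : F ≠ []) (hG : G ≠ [])
    (i k : ℕ) (hi1 : 1 ≤ i) (hi2 : i ≤ fsize F) (hk1 : 1 ≤ k) (hk2 : k ≤ fsize F)
    (hki : k = i ∨ AncestorIdx F k i)
    (j l : ℕ) (hj1 : 1 ≤ j) (hj2 : j ≤ fsize G) (hl1 : 1 ≤ l) (hl2 : l ≤ fsize G)
    (hlj : l = j ∨ AncestorIdx G l j) :
    fdist c (subforest F i (rlAt F k)) (subforest G j (rlAt G l)) =
      min (c (labelAt F i) none +
            fdist c (subforest F (i + 1) (rlAt F k)) (subforest G j (rlAt G l)))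
        (min (c none (labelAt G j) +
            fdist c (subforest F i (rlAt F k)) (subforest G (j + 1) (rlAt G l)))
          (c (labelAt F i) (labelAt G j) +
            fdist c (subforest F (i + 1) (rlAt F i)) (subforest G (j + 1) (rlAt G j)) +
            fdist c (subforest F (rlAt F i + 1) (rlAt F k))
              (subforest G (rlAt G j + 1) (rlAt G l)))) := by
  obtain ⟨⟨a, cs⟩, hti⟩ := exists_treeAt_eq_some hi1 hi2
  obtain ⟨⟨b, ds⟩, htj⟩ := exists_treeAt_eq_some hj1 hj2
  have hFi := add_size_le_rlAt_add_one hk1 hk2 hki hti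
  have hGj := add_size_le_rlAt_add_one hl1 hl2 hlj htj
  have hlabF : labelAt F i = some a := by rw [labelAt, hti]; rfl
  have hlabG : labelAt G j = some b := by rw [labelAt, htj]; rfl
  rw [subforest_eq_cons hi1 hti hFi, subforest_succ_eq_append hi1 hti hFi,
    subforest_eq_cons hj1 htj hGj, subforest_succ_eq_append hj1 htj hGj,
    rlAt_eq hti, rlAt_eq htj,
    subforest_succ_eq_children hi1 hti, subforest_succ_eq_children hj1 htj,
    Nat.sub_add_cancel (by omega), Nat.sub_add_cancel (by omega), hlabF, hlabG]
  simp only [fdist_eq_recDist hnn hse htr]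
  exact recDist_cons_cons c a b _ _ _ _

end TED
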